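/- arXiv:2605.07930 — 6 statements merged into one kernel-verified Lean document; each statement's English description precedes it below -/
import Mathlib

section
/- Let E be a real normed vector space. Let m ≥ 0 and let (g_k, C_k), k = 1,…,m, be pairs with g_k ∈ E, C_k > 0 and ‖g_k‖ ≤ C_k. Set c_0 = 0, c_k = C_1 + ⋯ + C_k, Γ = c_m, and define the importance-weighted sum S = Σ_{k=1}^{m} ((1/C_k) ∫_{c_{k−1}}^{c_k} f_Γ(c) dc) • g_k. Insert a new pair (g, C) with C > 0 and ‖g‖ ≤ C at an arbitrary position a ∈ {1,…,m+1}, yielding the sequence (g'_k, C'_k)_{k=1}^{m+1} with (g'_a, C'_a) = (g, C), g'_k = g_k, C'_k = C_k for k < a and g'_k = g_{k−1}, C'_k = C_{k−1} for k > a; set c'_0 = 0, c'_k = C'_1 + ⋯ + C'_k, Γ' = Γ + C, and S' = Σ_{k=1}^{m+1} ((1/C'_k) ∫_{c'_{k−1}}^{c'_k} f_{Γ'}(c) dc) • g'_k. Then ‖S' − S‖ ≤ C. -/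
open MeasureTheory

/-- The batch importance function (BIF) derived from a tail importance function `ftail`
with tail length `γ` and total clipping mass `Γ`. -/
noncomputable def BIF (γ : ℝ) (ftail : ℝ → ℝ) (Γ : ℝ) (c : ℝ) : ℝ :=
  if γ ≤ Γ ∧ c ≤ Γ - γ then 1 else ftail (c - (Γ - γ))

section Aux
variable {γ : ℝ} {ftail : ℝ → ℝ}

lemma BIF_shift {Γ Cn x : ℝ} (hx : 0 ≤ x) (hCn : 0 ≤ Cn) :
    BIF γ ftail (Γ + Cn) (x + Cn) = BIF γ ftail Γ x := by
  unfold BIF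
  have harg : x + Cn - (Γ + Cn - γ) = x - (Γ - γ) := by ring
  have hcond : (γ ≤ Γ + Cn ∧ x + Cn ≤ Γ + Cn - γ) ↔ (γ ≤ Γ ∧ x ≤ Γ - γ) := by
    constructor
    · rintro ⟨h1, h2⟩
      have hx2 : x ≤ Γ - γ := by linarith
      exact ⟨by linarith, hx2⟩
    · rintro ⟨h1, h2⟩; exact ⟨by linarith, by linarith⟩
  rw [harg]
  by_cases h : γ ≤ Γ ∧ x ≤ Γ - γ
  · rw [if_pos (hcond.mpr h), if_pos h]
  · rw [if_neg (fun hh => h (hcond.mp hh)), if_neg h]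

lemma BIF_mem (hbound : ∀ x ∈ Set.Icc (0 : ℝ) γ, ftail x ∈ Set.Icc (0 : ℝ) 1)
    {Γ x : ℝ} (hx0 : 0 ≤ x) (hxΓ : x ≤ Γ) :
    BIF γ ftail Γ x ∈ Set.Icc (0 : ℝ) 1 := by
  unfold BIF
  split_ifs with h
  · exact ⟨zero_le_one, le_refl 1⟩
  · apply hbound
    constructor
    · rcases not_and_or.mp h with h1 | h1
      · have : Γ < γ := lt_of_not_ge h1; linarith
      · have : Γ - γ < x := lt_of_not_ge h1; linarith
    · linarith

lemma BIF_mono (hanti : AntitoneOn ftail (Set.Icc 0 γ))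
    (hbound : ∀ x ∈ Set.Icc (0 : ℝ) γ, ftail x ∈ Set.Icc (0 : ℝ) 1)
    {Γ Cn x : ℝ} (hx0 : 0 ≤ x) (hxΓ : x ≤ Γ) (hCn : 0 ≤ Cn) :
    BIF γ ftail Γ x ≤ BIF γ ftail (Γ + Cn) x := by
  by_cases h' : γ ≤ Γ + Cn ∧ x ≤ Γ + Cn - γ
  · have := (BIF_mem hbound hx0 hxΓ (Γ := Γ)).2
    unfold BIF; rw [if_pos h']; exact this
  · have hcase : ¬ (γ ≤ Γ ∧ x ≤ Γ - γ) := by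
      intro ⟨h1, h2⟩; exact h' ⟨by linarith, by linarith⟩
    unfold BIF
    rw [if_neg h', if_neg hcase]
    have ht0 : 0 ≤ x - (Γ - γ) := by
      rcases not_and_or.mp hcase with h1 | h1
      · have : Γ < γ := lt_of_not_ge h1; linarith
      · have : Γ - γ < x := lt_of_not_ge h1; linarith
    have ht0' : 0 ≤ x - (Γ + Cn - γ) := by
      rcases not_and_or.mp h' with h1 | h1
      · have : Γ + Cn < γ := lt_of_not_ge h1; linarith
      · have : Γ + Cn - γ < x := lt_of_not_ge h1; linarith
    have htγ : x - (Γ - γ) ≤ γ := by linarith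
    have htγ' : x - (Γ + Cn - γ) ≤ γ := by linarith
    exact hanti ⟨ht0', htγ'⟩ ⟨ht0, htγ⟩ (by linarith)

lemma BIF_integrable (hint : ∀ a b : ℝ, IntervalIntegrable ftail volume a b)
    (Γ u v : ℝ) : IntervalIntegrable (BIF γ ftail Γ) volume u v := by
  have hft : ∀ u' v' : ℝ, IntervalIntegrable (fun x => ftail (x - (Γ - γ))) volume u' v' := by
    intro u' v'
    simpa using (hint (u' - (Γ - γ)) (v' - (Γ - γ))).comp_sub_right (Γ - γ)
  by_cases hγΓ : γ ≤ Γ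
  · set d := Γ - γ with hd
    set w1 := min u (min v d) with hw1
    set w2 := max u (max v d) with hw2
    have hw1d : w1 ≤ d := le_trans (min_le_right _ _) (min_le_right _ _)
    have hdw2 : d ≤ w2 := le_trans (le_max_right _ _) (le_max_right _ _)
    have h1 : IntervalIntegrable (BIF γ ftail Γ) volume w1 d := by
      rw [intervalIntegrable_iff]
      apply (intervalIntegrable_iff.mp
        (intervalIntegrable_const (c := (1:ℝ)) (a := w1) (b := d))).congr_fun
      · intro x hx
        rw [Set.uIoc_of_le hw1d] at hx
        exact (if_pos ⟨hγΓ, hx.2⟩).symm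
      · exact measurableSet_uIoc
    have h2 : IntervalIntegrable (BIF γ ftail Γ) volume d w2 := by
      rw [intervalIntegrable_iff]
      apply (intervalIntegrable_iff.mp (hft d w2)).congr_fun
      · intro x hx
        rw [Set.uIoc_of_le hdw2] at hx
        exact (if_neg (fun hh => absurd hh.2 (not_le.mpr hx.1))).symm
      · exact measurableSet_uIoc
    refine (h1.trans h2).mono_set ?_
    apply Set.uIcc_subset_uIcc
    · exact Set.mem_uIcc.mpr (Or.inl ⟨min_le_left _ _, le_max_left _ _⟩)
    · exact Set.mem_uIcc.mpr (Or.inl ⟨le_trans (min_le_right _ _) (min_le_left _ _),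
        le_trans (le_max_left _ _) (le_max_right _ _)⟩)
  · have : BIF γ ftail Γ = fun x => ftail (x - (Γ - γ)) := by
      funext x; exact if_neg (fun hh => hγΓ hh.1)
    rw [this]; exact hft u v

end Aux

/-- Modular-sensitivity core of INO-SGD: inserting one pair `(gn, Cn)` with `‖gn‖ ≤ Cn`
at position `a` changes the BIF-weighted sum of clipped gradients by at most `Cn`. -/
theorem stmt0 {E : Type*} [NormedAddCommGroup E] [NormedSpace ℝ E]
    (γ : ℝ) (hγ : 0 < γ) (ftail : ℝ → ℝ)
    (hanti : AntitoneOn ftail (Set.Icc 0 γ))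
    (hbound : ∀ x ∈ Set.Icc (0 : ℝ) γ, ftail x ∈ Set.Icc (0 : ℝ) 1)
    (hint : ∀ a b : ℝ, IntervalIntegrable ftail volume a b)
    (m : ℕ) (g : ℕ → E) (C : ℕ → ℝ)
    (hC : ∀ k < m, 0 < C k) (hg : ∀ k < m, ‖g k‖ ≤ C k)
    (gn : E) (Cn : ℝ) (hCn : 0 < Cn) (hgn : ‖gn‖ ≤ Cn)
    (a : ℕ) (ha : a ≤ m)
    (c : ℕ → ℝ) (hc : ∀ k, c k = ∑ i ∈ Finset.range k, C i)
    (Γ : ℝ) (hΓ : Γ = c m)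
    (g' : ℕ → E) (hg' : ∀ k, g' k = if k < a then g k else if k = a then gn else g (k - 1))
    (C' : ℕ → ℝ) (hC' : ∀ k, C' k = if k < a then C k else if k = a then Cn else C (k - 1))
    (c' : ℕ → ℝ) (hc' : ∀ k, c' k = ∑ i ∈ Finset.range k, C' i)
    (Γ' : ℝ) (hΓ' : Γ' = Γ + Cn)
    (S : E) (hS : S = ∑ k ∈ Finset.range m,
        ((1 / C k) * ∫ x in (c k)..(c (k + 1)), BIF γ ftail Γ x) • g k)
    (S' : E) (hS' : S' = ∑ k ∈ Finset.range (m + 1),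
        ((1 / C' k) * ∫ x in (c' k)..(c' (k + 1)), BIF γ ftail Γ' x) • g' k) :
    ‖S' - S‖ ≤ Cn := by
  subst hΓ'
  -- basic facts about c
  have csucc : ∀ k, c (k + 1) = c k + C k := by
    intro k; rw [hc, hc, Finset.sum_range_succ]
  have c0 : c 0 = 0 := by simp [hc]
  have cmono : ∀ j k : ℕ, j ≤ k → k ≤ m → c j ≤ c k := by
    intro j k hjk hkm
    rw [hc, hc]
    apply Finset.sum_le_sum_of_subset_of_nonneg (Finset.range_subset_range.mpr hjk)
    intro i hi _
    exact (hC i (lt_of_lt_of_le (Finset.mem_range.mp hi) hkm)).le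
  have cnonneg : ∀ k, k ≤ m → 0 ≤ c k := by
    intro k hk; rw [← c0]; exact cmono 0 k (Nat.zero_le k) hk
  have hΓ0 : 0 ≤ Γ := hΓ ▸ cnonneg m le_rfl
  -- facts about c'
  have c'succ : ∀ k, c' (k + 1) = c' k + C' k := by
    intro k; rw [hc', hc', Finset.sum_range_succ]
  have hc'le : ∀ k, k ≤ a → c' k = c k := by
    intro k hk
    rw [hc', hc]
    apply Finset.sum_congr rfl
    intro i hi
    rw [hC' i, if_pos (lt_of_lt_of_le (Finset.mem_range.mp hi) hk)]
  have hC'a : C' a = Cn := by rw [hC' a]; simp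
  have hc'shift : ∀ i : ℕ, c' (a + 1 + i) = c (a + i) + Cn := by
    intro i
    induction i with
    | zero =>
      simp only [Nat.add_zero]
      rw [c'succ, hc'le a le_rfl, hC'a]
    | succ i ih =>
      have e1 : a + 1 + (i + 1) = (a + 1 + i) + 1 := by omega
      rw [e1, c'succ, ih, hC' (a + 1 + i)]
      have h2 : ¬ (a + 1 + i < a) := by omega
      have h3 : ¬ (a + 1 + i = a) := by omega
      rw [if_neg h2, if_neg h3]
      have e2 : a + 1 + i - 1 = a + i := by omega
      have e3 : a + (i + 1) = (a + i) + 1 := by omega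
      rw [e2, e3, csucc]; ring
  -- split m as a + n
  obtain ⟨n, hn⟩ : ∃ n, m = a + n := ⟨m - a, (Nat.add_sub_cancel' ha).symm⟩
  subst hn
  rw [Finset.sum_range_add] at hS
  have e4 : a + n + 1 = a + (n + 1) := by omega
  rw [e4, Finset.sum_range_add, Finset.sum_range_succ'] at hS'
  -- the shifted terms agree
  have hshift_terms : ∀ i ∈ Finset.range n,
      ((1 / C' (a + (i + 1))) * ∫ x in (c' (a + (i + 1)))..(c' (a + (i + 1) + 1)),
          BIF γ ftail (Γ + Cn) x) • g' (a + (i + 1))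
      = ((1 / C (a + i)) * ∫ x in (c (a + i))..(c (a + i + 1)),
          BIF γ ftail Γ x) • g (a + i) := by
    intro i hi
    have him : a + i < a + n := by
      have := Finset.mem_range.mp hi; omega
    have h2 : ¬ (a + (i + 1) < a) := by omega
    have h3 : ¬ (a + (i + 1) = a) := by omega
    have e5 : a + (i + 1) - 1 = a + i := by omega
    have hgk : g' (a + (i + 1)) = g (a + i) := by
      rw [hg', if_neg h2, if_neg h3, e5]
    have hCk : C' (a + (i + 1)) = C (a + i) := by
      rw [hC', if_neg h2, if_neg h3, e5]
    have e6 : a + (i + 1) = a + 1 + i := by omega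
    have e7 : a + (i + 1) + 1 = a + 1 + (i + 1) := by omega
    have hcl : c' (a + (i + 1)) = c (a + i) + Cn := by rw [e6, hc'shift]
    have hcr : c' (a + (i + 1) + 1) = c (a + (i + 1)) + Cn := by rw [e7, hc'shift]
    have e8 : a + (i + 1) = a + i + 1 := by omega
    have hIcc : c (a + i) ≤ c (a + i + 1) := cmono _ _ (by omega) (by omega)
    have hInt : (∫ x in (c (a + i) + Cn)..(c (a + i + 1) + Cn), BIF γ ftail (Γ + Cn) x)
        = ∫ x in (c (a + i))..(c (a + i + 1)), BIF γ ftail Γ x := by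
      rw [← intervalIntegral.integral_comp_add_right (fun x => BIF γ ftail (Γ + Cn) x) Cn]
      apply intervalIntegral.integral_congr
      intro x hx
      rw [Set.uIcc_of_le hIcc] at hx
      exact BIF_shift (le_trans (cnonneg _ (by omega)) hx.1) hCn.le
    rw [hgk, hCk, hcl, hcr, e8, hInt]
  rw [Finset.sum_congr rfl hshift_terms] at hS'
  -- key decomposition
  have key : S' - S =
      (∑ k ∈ Finset.range a,
        (((1 / C' k) * ∫ x in (c' k)..(c' (k + 1)), BIF γ ftail (Γ + Cn) x) • g' k
          - ((1 / C k) * ∫ x in (c k)..(c (k + 1)), BIF γ ftail Γ x) • g k))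
      + ((1 / C' (a + 0)) * ∫ x in (c' (a + 0))..(c' (a + 0 + 1)),
          BIF γ ftail (Γ + Cn) x) • g' (a + 0) := by
    rw [hS, hS', Finset.sum_sub_distrib]
    abel
  rw [key]
  -- bound the inserted term
  have hc'a : c' a = c a := hc'le a le_rfl
  have hc'a1 : c' (a + 1) = c a + Cn := by
    have h0 := hc'shift 0
    rw [Nat.add_zero, Nat.add_zero] at h0
    exact h0
  have hcaΓ : c a ≤ Γ := hΓ ▸ cmono a (a + n) (by omega) le_rfl
  have hca0 : 0 ≤ c a := cnonneg a (by omega)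
  have hIa_nonneg : 0 ≤ ∫ x in (c a)..(c a + Cn), BIF γ ftail (Γ + Cn) x := by
    apply intervalIntegral.integral_nonneg (by linarith)
    intro x hx
    exact (BIF_mem hbound (le_trans hca0 hx.1) (by linarith [hx.2])).1
  have hTa : ‖((1 / C' (a + 0)) * ∫ x in (c' (a + 0))..(c' (a + 0 + 1)),
        BIF γ ftail (Γ + Cn) x) • g' (a + 0)‖
      ≤ ∫ x in (c a)..(c a + Cn), BIF γ ftail (Γ + Cn) x := by
    have hga : g' (a + 0) = gn := by rw [hg']; simp
    have hCa : C' (a + 0) = Cn := by rw [Nat.add_zero]; exact hC'a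
    rw [hga, hCa, Nat.add_zero, hc'a, hc'a1, norm_smul]
    rw [Real.norm_eq_abs, abs_of_nonneg (mul_nonneg (by positivity) hIa_nonneg)]
    calc (1 / Cn * ∫ x in (c a)..(c a + Cn), BIF γ ftail (Γ + Cn) x) * ‖gn‖
        ≤ (1 / Cn * ∫ x in (c a)..(c a + Cn), BIF γ ftail (Γ + Cn) x) * Cn := by
          apply mul_le_mul_of_nonneg_left hgn (by positivity)
      _ = ∫ x in (c a)..(c a + Cn), BIF γ ftail (Γ + Cn) x := by
          field_simp
  -- bound each earlier term
  have hterm : ∀ k ∈ Finset.range a,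
      ‖((1 / C' k) * ∫ x in (c' k)..(c' (k + 1)), BIF γ ftail (Γ + Cn) x) • g' k
        - ((1 / C k) * ∫ x in (c k)..(c (k + 1)), BIF γ ftail Γ x) • g k‖
      ≤ (∫ x in (c k)..(c (k + 1)), BIF γ ftail (Γ + Cn) x)
        - ∫ x in (c k)..(c (k + 1)), BIF γ ftail Γ x := by
    intro k hk
    have hka : k < a := Finset.mem_range.mp hk
    have hkm : k < a + n := by omega
    have hgk : g' k = g k := by rw [hg', if_pos hka]
    have hCk : C' k = C k := by rw [hC', if_pos hka]
    have hcl : c' k = c k := hc'le k hka.le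
    have hcr : c' (k + 1) = c (k + 1) := hc'le (k + 1) hka
    have hCkpos : 0 < C k := hC k hkm
    have hIcc : c k ≤ c (k + 1) := cmono _ _ (by omega) (by omega)
    have hmonoI : (∫ x in (c k)..(c (k + 1)), BIF γ ftail Γ x)
        ≤ ∫ x in (c k)..(c (k + 1)), BIF γ ftail (Γ + Cn) x := by
      apply intervalIntegral.integral_mono_on hIcc
        (BIF_integrable hint Γ _ _) (BIF_integrable hint (Γ + Cn) _ _)
      intro x hx
      have hx0 : 0 ≤ x := le_trans (cnonneg k (by omega)) hx.1
      have hxΓ : x ≤ Γ := le_trans hx.2 (hΓ ▸ cmono (k + 1) (a + n) (by omega) le_rfl)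
      exact BIF_mono hanti hbound hx0 hxΓ hCn.le
    rw [hgk, hCk, hcl, hcr, ← sub_smul, norm_smul, Real.norm_eq_abs, ← mul_sub,
      abs_mul, abs_of_nonneg (one_div_nonneg.mpr hCkpos.le),
      abs_of_nonneg (by linarith)]
    calc 1 / C k * ((∫ x in (c k)..(c (k+1)), BIF γ ftail (Γ + Cn) x)
            - ∫ x in (c k)..(c (k+1)), BIF γ ftail Γ x) * ‖g k‖
        ≤ 1 / C k * ((∫ x in (c k)..(c (k+1)), BIF γ ftail (Γ + Cn) x)
            - ∫ x in (c k)..(c (k+1)), BIF γ ftail Γ x) * C k := by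
          apply mul_le_mul_of_nonneg_left (hg k hkm)
            (mul_nonneg (one_div_nonneg.mpr hCkpos.le) (by linarith))
      _ = _ := by field_simp
  -- telescoping sums
  have hadj : ∀ (Θ : ℝ), ∀ k < a, IntervalIntegrable (BIF γ ftail Θ) volume (c k) (c (k + 1)) :=
    fun Θ k _ => BIF_integrable hint Θ _ _
  have htel : ∀ (Θ : ℝ), ∑ k ∈ Finset.range a,
      (∫ x in (c k)..(c (k + 1)), BIF γ ftail Θ x) = ∫ x in (0:ℝ)..(c a), BIF γ ftail Θ x := by
    intro Θ
    rw [← c0]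
    exact intervalIntegral.sum_integral_adjacent_intervals (hadj Θ)
  -- the final chain
  have hshift0 : (∫ x in (0:ℝ)..(c a), BIF γ ftail Γ x)
      = ∫ x in Cn..(c a + Cn), BIF γ ftail (Γ + Cn) x := by
    have h := intervalIntegral.integral_comp_add_right (a := (0:ℝ)) (b := c a)
      (fun x => BIF γ ftail (Γ + Cn) x) Cn
    rw [zero_add] at h
    rw [← h]
    apply intervalIntegral.integral_congr
    intro x hx
    rw [Set.uIcc_of_le hca0] at hx
    exact (BIF_shift hx.1 hCn.le).symm
  have hchasles1 : (∫ x in (0:ℝ)..(c a), BIF γ ftail (Γ + Cn) x)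
      + (∫ x in (c a)..(c a + Cn), BIF γ ftail (Γ + Cn) x)
      = ∫ x in (0:ℝ)..(c a + Cn), BIF γ ftail (Γ + Cn) x :=
    intervalIntegral.integral_add_adjacent_intervals
      (BIF_integrable hint _ _ _) (BIF_integrable hint _ _ _)
  have hchasles2 : (∫ x in (0:ℝ)..Cn, BIF γ ftail (Γ + Cn) x)
      + (∫ x in Cn..(c a + Cn), BIF γ ftail (Γ + Cn) x)
      = ∫ x in (0:ℝ)..(c a + Cn), BIF γ ftail (Γ + Cn) x :=
    intervalIntegral.integral_add_adjacent_intervals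
      (BIF_integrable hint _ _ _) (BIF_integrable hint _ _ _)
  have hfinal : (∫ x in (0:ℝ)..Cn, BIF γ ftail (Γ + Cn) x) ≤ Cn := by
    have h1 : (∫ x in (0:ℝ)..Cn, BIF γ ftail (Γ + Cn) x) ≤ ∫ x in (0:ℝ)..Cn, (1:ℝ) := by
      apply intervalIntegral.integral_mono_on hCn.le
        (BIF_integrable hint _ _ _) intervalIntegrable_const
      intro x hx
      exact (BIF_mem hbound hx.1 (by linarith [hx.2])).2
    simpa using h1
  calc ‖(∑ k ∈ Finset.range a,
        (((1 / C' k) * ∫ x in (c' k)..(c' (k + 1)), BIF γ ftail (Γ + Cn) x) • g' k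
          - ((1 / C k) * ∫ x in (c k)..(c (k + 1)), BIF γ ftail Γ x) • g k))
      + ((1 / C' (a + 0)) * ∫ x in (c' (a + 0))..(c' (a + 0 + 1)),
          BIF γ ftail (Γ + Cn) x) • g' (a + 0)‖
      ≤ (∑ k ∈ Finset.range a,
          ‖((1 / C' k) * ∫ x in (c' k)..(c' (k + 1)), BIF γ ftail (Γ + Cn) x) • g' k
            - ((1 / C k) * ∫ x in (c k)..(c (k + 1)), BIF γ ftail Γ x) • g k‖)
        + ‖((1 / C' (a + 0)) * ∫ x in (c' (a + 0))..(c' (a + 0 + 1)),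
            BIF γ ftail (Γ + Cn) x) • g' (a + 0)‖ :=
        le_trans (norm_add_le _ _) (by gcongr; exact norm_sum_le _ _)
    _ ≤ (∑ k ∈ Finset.range a,
          ((∫ x in (c k)..(c (k + 1)), BIF γ ftail (Γ + Cn) x)
            - ∫ x in (c k)..(c (k + 1)), BIF γ ftail Γ x))
        + ∫ x in (c a)..(c a + Cn), BIF γ ftail (Γ + Cn) x := by
        exact add_le_add (Finset.sum_le_sum hterm) hTa
    _ = (∫ x in (0:ℝ)..Cn, BIF γ ftail (Γ + Cn) x) := by
        rw [Finset.sum_sub_distrib, htel Γ, htel (Γ + Cn), hshift0]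
        linarith [hchasles1, hchasles2]
    _ ≤ Cn := hfinal
end

section
/- Let E be a real normed vector space and f : ℝ → ℝ be non-increasing with 0 ≤ f(c) ≤ 1 for all c and interval-integrable. Let a ≥ 1, let 0 = c_0 < c_1 < ⋯ < c_a be real numbers, set C = c_a − c_{a−1}, and let g_1, …, g_a ∈ E satisfy ‖g_k‖ ≤ c_k − c_{k−1} for all k = 1,…,a. Then ‖ ((1/(c_a − c_{a−1})) ∫_{c_{a−1}}^{c_a} f) • g_a + Σ_{k=1}^{a−1} ((∫_{c_{k−1}}^{c_k} f − ∫_{c_{k−1}+C}^{c_k+C} f)/(c_k − c_{k−1})) • g_k ‖ ≤ C. -/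
open MeasureTheory

/-- Key inequality chain in the privacy proof of INO-SGD: the new importance-weighted
contribution of the added datum plus the increases in importance of the higher-ranked
data has norm at most `C = c a - c (a-1)`. -/
theorem stmt1 {E : Type*} [NormedAddCommGroup E] [NormedSpace ℝ E]
    (f : ℝ → ℝ) (hmono : Antitone f)
    (h0 : ∀ x, 0 ≤ f x) (h1 : ∀ x, f x ≤ 1)
    (hint : ∀ a b : ℝ, IntervalIntegrable f volume a b)
    (a : ℕ) (ha : 1 ≤ a)
    (c : ℕ → ℝ) (hc0 : c 0 = 0) (hcmono : ∀ k < a, c k < c (k + 1))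
    (g : ℕ → E) (hg : ∀ k, 1 ≤ k → k ≤ a → ‖g k‖ ≤ c k - c (k - 1)) :
    ‖((1 / (c a - c (a - 1))) * ∫ x in (c (a - 1))..(c a), f x) • g a
        + ∑ k ∈ Finset.Ico 1 a,
            (((∫ x in (c (k - 1))..(c k), f x)
                - ∫ x in (c (k - 1) + (c a - c (a - 1)))..(c k + (c a - c (a - 1))), f x)
              / (c k - c (k - 1))) • g k‖
      ≤ c a - c (a - 1) := by
  set C := c a - c (a - 1) with hC
  have hsucc : ∀ k, 1 ≤ k → k ≤ a → c (k - 1) < c k := by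
    intro k h1k hka
    have h := hcmono (k - 1) (by omega)
    have hk : k - 1 + 1 = k := by omega
    rwa [hk] at h
  have hCpos : 0 < C := by
    have := hsucc a ha le_rfl; linarith
  -- telescoping sums
  have tele : ∀ (d : ℝ) (n : ℕ),
      ∑ i ∈ Finset.range n, ∫ x in (c i + d)..(c (i + 1) + d), f x
        = ∫ x in (c 0 + d)..(c n + d), f x := by
    intro d n
    induction n with
    | zero => simp
    | succ n ih =>
      rw [Finset.sum_range_succ, ih,
        intervalIntegral.integral_add_adjacent_intervals (hint _ _) (hint _ _)]
  have key : ∀ d : ℝ,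
      ∑ k ∈ Finset.Ico 1 a, ∫ x in (c (k - 1) + d)..(c k + d), f x
        = ∫ x in (c 0 + d)..(c (a - 1) + d), f x := by
    intro d
    rw [Finset.sum_Ico_eq_sum_range]
    rw [show (∑ i ∈ Finset.range (a - 1),
        ∫ x in (c (1 + i - 1) + d)..(c (1 + i) + d), f x)
      = ∑ i ∈ Finset.range (a - 1), ∫ x in (c i + d)..(c (i + 1) + d), f x from
      Finset.sum_congr rfl fun i _ => by norm_num [add_comm 1 i]]
    exact tele d (a - 1)
  -- per-term coefficient bound
  have coeff_bound : ∀ k ∈ Finset.Ico 1 a,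
      ‖(((∫ x in (c (k - 1))..(c k), f x) - ∫ x in (c (k - 1) + C)..(c k + C), f x)
          / (c k - c (k - 1))) • g k‖
        ≤ (∫ x in (c (k - 1))..(c k), f x) - ∫ x in (c (k - 1) + C)..(c k + C), f x := by
    intro k hk
    obtain ⟨h1k, hka⟩ := Finset.mem_Ico.mp hk
    have hlt := hsucc k h1k hka.le
    have hJI : (∫ x in (c (k - 1) + C)..(c k + C), f x)
        ≤ ∫ x in (c (k - 1))..(c k), f x := by
      rw [← intervalIntegral.integral_comp_add_right f C]
      refine intervalIntegral.integral_mono_on hlt.le ?_ (hint _ _) ?_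
      · simpa using (hint (c (k - 1) + C) (c k + C)).comp_add_right C
      · intro x _
        exact hmono (by linarith)
    have hnum : 0 ≤ (∫ x in (c (k - 1))..(c k), f x)
        - ∫ x in (c (k - 1) + C)..(c k + C), f x := by linarith
    rw [norm_smul, Real.norm_eq_abs,
      abs_of_nonneg (div_nonneg hnum (by linarith))]
    calc ((∫ x in (c (k - 1))..(c k), f x)
            - ∫ x in (c (k - 1) + C)..(c k + C), f x) / (c k - c (k - 1)) * ‖g k‖
        ≤ ((∫ x in (c (k - 1))..(c k), f x)
            - ∫ x in (c (k - 1) + C)..(c k + C), f x) / (c k - c (k - 1))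
            * (c k - c (k - 1)) := by
          apply mul_le_mul_of_nonneg_left (hg k h1k hka.le)
          exact div_nonneg hnum (by linarith)
      _ = _ := div_mul_cancel₀ _ (by linarith)
  -- first term bound
  have hIa_nonneg : 0 ≤ ∫ x in (c (a - 1))..(c a), f x :=
    intervalIntegral.integral_nonneg (by linarith) fun x _ => h0 x
  have first_bound : ‖((1 / C) * ∫ x in (c (a - 1))..(c a), f x) • g a‖
      ≤ ∫ x in (c (a - 1))..(c a), f x := by
    rw [norm_smul, Real.norm_eq_abs,
      abs_of_nonneg (mul_nonneg (by positivity) hIa_nonneg)]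
    calc (1 / C) * (∫ x in (c (a - 1))..(c a), f x) * ‖g a‖
        ≤ (1 / C) * (∫ x in (c (a - 1))..(c a), f x) * C := by
          apply mul_le_mul_of_nonneg_left _ (mul_nonneg (by positivity) hIa_nonneg)
          simpa using hg a ha le_rfl
      _ = _ := by field_simp
  calc ‖((1 / C) * ∫ x in (c (a - 1))..(c a), f x) • g a
        + ∑ k ∈ Finset.Ico 1 a,
            (((∫ x in (c (k - 1))..(c k), f x)
                - ∫ x in (c (k - 1) + C)..(c k + C), f x)
              / (c k - c (k - 1))) • g k‖
      ≤ ‖((1 / C) * ∫ x in (c (a - 1))..(c a), f x) • g a‖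
        + ∑ k ∈ Finset.Ico 1 a,
            ‖(((∫ x in (c (k - 1))..(c k), f x)
                - ∫ x in (c (k - 1) + C)..(c k + C), f x)
              / (c k - c (k - 1))) • g k‖ :=
        (norm_add_le _ _).trans (by gcongr; exact norm_sum_le _ _)
    _ ≤ (∫ x in (c (a - 1))..(c a), f x)
        + ∑ k ∈ Finset.Ico 1 a,
            ((∫ x in (c (k - 1))..(c k), f x)
                - ∫ x in (c (k - 1) + C)..(c k + C), f x) := by
        gcongr with k hk
        exact coeff_bound k hk
    _ = (∫ x in (c (a - 1))..(c a), f x)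
        + ((∫ x in (c 0)..(c (a - 1)), f x) - ∫ x in (c 0 + C)..(c (a - 1) + C), f x) := by
        rw [Finset.sum_sub_distrib]
        have k0 := key 0
        simp only [add_zero] at k0
        rw [k0, key C]
    _ = ∫ x in (0 : ℝ)..C, f x := by
        have hca : c a = c (a - 1) + C := by rw [hC]; ring
        rw [hc0, zero_add]
        have h₁ : (∫ x in (0:ℝ)..(c (a - 1)), f x)
            + ∫ x in (c (a - 1))..(c a), f x = ∫ x in (0:ℝ)..(c a), f x :=
          intervalIntegral.integral_add_adjacent_intervals (hint _ _) (hint _ _)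
        have h₂ : (∫ x in (0:ℝ)..C, f x)
            + ∫ x in C..(c a), f x = ∫ x in (0:ℝ)..(c a), f x :=
          intervalIntegral.integral_add_adjacent_intervals (hint _ _) (hint _ _)
        rw [← hca]
        linarith
    _ ≤ C := by
        have := intervalIntegral.integral_mono_on (μ := volume) (f := f)
          (g := fun _ => (1:ℝ)) hCpos.le (hint 0 C)
          intervalIntegrable_const (fun x _ => h1 x)
        simpa using this
end

section
/- Let E be a real normed vector space, (Ω, 𝓕, P) a probability space, v ∈ E, ξ ≥ 0 and C > 0. Let g : Ω → E be strongly measurable with ‖g(ω) − v‖ ≤ ξ for P-almost every ω. Then | ∫_Ω h_C(‖g(ω)‖) dP(ω) − h_C(‖v‖) | ≤ C·ξ / (max{‖v‖ − ξ, C})². -/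
open MeasureTheory

/-- The clipping factor: `h_C(x) = 1` if `x ≤ C` and `h_C(x) = C / x` otherwise. -/
noncomputable def clipFactor (C x : ℝ) : ℝ := if x ≤ C then 1 else C / x

lemma clipFactor_lip {C : ℝ} (hC : 0 < C) (m x y : ℝ) (hx : m ≤ x) (hy : m ≤ y) :
    |clipFactor C x - clipFactor C y| ≤ C * |x - y| / (max m C) ^ 2 := by
  have hD : (0:ℝ) < max m C := lt_of_lt_of_le hC (le_max_right _ _)
  unfold clipFactor
  by_cases hxC : x ≤ C <;> by_cases hyC : y ≤ C <;> simp only [hxC, hyC, if_true, if_false]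
  · simp only [sub_self, abs_zero]
    positivity
  · push_neg at hyC
    have hD' : max m C = C := max_eq_right (hx.trans hxC)
    rw [hD']
    have hy0 : (0:ℝ) < y := hC.trans hyC
    have h1 : C / y ≤ 1 := by rw [div_le_one hy0]; linarith
    rw [abs_of_nonneg (by linarith), abs_of_nonpos (by linarith), neg_sub]
    have hrw : 1 - C / y = (y - C) / y := by field_simp
    rw [hrw, div_le_div_iff₀ (by positivity) (by positivity)]
    nlinarith [mul_nonneg (sub_nonneg.2 hyC.le) (sub_nonneg.2 hyC.le),
      mul_nonneg (sub_nonneg.2 hxC) hC.le,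
      mul_nonneg (sub_nonneg.2 hyC.le) (sub_nonneg.2 hxC)]
  · push_neg at hxC
    have hD' : max m C = C := max_eq_right (hy.trans hyC)
    rw [hD']
    have hx0 : (0:ℝ) < x := hC.trans hxC
    have h1 : C / x ≤ 1 := by rw [div_le_one hx0]; linarith
    rw [abs_of_nonpos (by linarith), abs_of_nonneg (by linarith), neg_sub]
    have hrw : 1 - C / x = (x - C) / x := by field_simp
    rw [hrw, div_le_div_iff₀ (by positivity) (by positivity)]
    nlinarith [mul_nonneg (sub_nonneg.2 hxC.le) (sub_nonneg.2 hxC.le),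
      mul_nonneg (sub_nonneg.2 hyC) hC.le,
      mul_nonneg (sub_nonneg.2 hxC.le) (sub_nonneg.2 hyC)]
  · push_neg at hxC hyC
    have hx0 : (0:ℝ) < x := hC.trans hxC
    have hy0 : (0:ℝ) < y := hC.trans hyC
    have hxD : max m C ≤ x := max_le hx hxC.le
    have hyD : max m C ≤ y := max_le hy hyC.le
    have key : C / x - C / y = C * (y - x) / (x * y) := by field_simp
    rw [key, abs_div, abs_mul, abs_of_pos hC, abs_of_pos (by positivity : (0:ℝ) < x * y)]
    rw [← neg_sub x y, abs_neg]
    apply div_le_div_of_nonneg_left (by positivity) (by positivity)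
    nlinarith

/-- Bound on the deviation of the expected clipping factor of a stochastic gradient `g`
(uniformly within `ξ` of the full gradient `v`) from the clipping factor of `v`. -/
theorem stmt6 {E : Type*} [NormedAddCommGroup E] [NormedSpace ℝ E]
    {Ω : Type*} [MeasurableSpace Ω] (P : Measure Ω) [IsProbabilityMeasure P]
    (v : E) (ξ : ℝ) (hξ : 0 ≤ ξ) (C : ℝ) (hC : 0 < C)
    (g : Ω → E) (hmeas : StronglyMeasurable g)
    (hdev : ∀ᵐ ω ∂P, ‖g ω - v‖ ≤ ξ) :
    |(∫ ω, clipFactor C ‖g ω‖ ∂P) - clipFactor C ‖v‖|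
      ≤ C * ξ / (max (‖v‖ - ξ) C) ^ 2 := by
  set D := max (‖v‖ - ξ) C with hDdef
  have hD : (0:ℝ) < D := lt_of_lt_of_le hC (le_max_right _ _)
  -- measurability
  have hclip : Measurable (clipFactor C) := by
    unfold clipFactor
    exact Measurable.ite measurableSet_Iic measurable_const (measurable_const.div measurable_id)
  have hf : Measurable (fun ω => clipFactor C ‖g ω‖) :=
    hclip.comp hmeas.norm.measurable
  -- bound on clipFactor values
  have hbound : ∀ x : ℝ, |clipFactor C x| ≤ 1 := by
    intro x
    unfold clipFactor
    split_ifs with h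
    · simp
    · push_neg at h
      have hx0 : (0:ℝ) < x := hC.trans h
      rw [abs_of_nonneg (by positivity)]
      rw [div_le_one hx0]; linarith
  have hint : Integrable (fun ω => clipFactor C ‖g ω‖) P :=
    (integrable_const (1:ℝ)).mono' hf.aestronglyMeasurable
      (Filter.Eventually.of_forall fun ω => hbound _)
  have hconst : Integrable (fun _ : Ω => clipFactor C ‖v‖) P := integrable_const _
  have key : (∫ ω, clipFactor C ‖g ω‖ ∂P) - clipFactor C ‖v‖
      = ∫ ω, (clipFactor C ‖g ω‖ - clipFactor C ‖v‖) ∂P := by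
    rw [integral_sub hint hconst, integral_const]
    simp
  rw [key]
  have hae : ∀ᵐ ω ∂P, ‖clipFactor C ‖g ω‖ - clipFactor C ‖v‖‖ ≤ C * ξ / D ^ 2 := by
    filter_upwards [hdev] with ω hω
    have h1 : |‖g ω‖ - ‖v‖| ≤ ξ := (abs_norm_sub_norm_le _ _).trans hω
    have h2 : ‖v‖ - ξ ≤ ‖g ω‖ := by
      have := abs_le.mp h1
      linarith [this.1]
    have h3 : ‖v‖ - ξ ≤ ‖v‖ := by linarith
    have := clipFactor_lip hC (‖v‖ - ξ) ‖g ω‖ ‖v‖ h2 h3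
    rw [Real.norm_eq_abs]
    refine this.trans ?_
    gcongr
  calc |∫ ω, (clipFactor C ‖g ω‖ - clipFactor C ‖v‖) ∂P|
      ≤ C * ξ / D ^ 2 := by
        rw [← Real.norm_eq_abs]
        calc ‖∫ ω, (clipFactor C ‖g ω‖ - clipFactor C ‖v‖) ∂P‖
            ≤ ∫ ω, (fun _ => C * ξ / D ^ 2) ω ∂P :=
              norm_integral_le_of_norm_le (integrable_const _) hae
          _ = C * ξ / D ^ 2 := by simp
end

section
/- In the setting of the one-step expected loss bound for IDP-SGD (objective ℒ₁ differentiable with L₂-Lipschitz gradient; fixed iterate θ with u = ∇ℒ₁(θ); mean gradient v of the second owner; batches B₁, B₂ of stochastic gradients g_d with a.s. deviations ≤ ξ₁ and ≤ ξ₂ from u and v respectively; clipping factors φ_d = h_{C₁}(‖g_d‖) or h_{C₂}(‖g_d‖); zero-mean square-integrable noise Z with E[⟪G, Z⟫] = 0 where G = Σ φ_d g_d; update θ'(η) = θ − (η/b)(G + Z) with b > 0, and ℒ₁∘θ'(η) integrable for each η), suppose additionally that Σ_{d∈B₁} E[φ_d]·(‖u‖² − ξ₁‖u‖) + Σ_{d∈B₂}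 E[φ_d]·(⟪u, v⟫ − ξ₂‖u‖) > 0. Then there exists η₀ > 0 such that for every learning rate η with 0 < η < η₀, the expected loss strictly decreases: E[ℒ₁(θ'(η))] < ℒ₁(θ). -/
/-!
The descent lemma for a function with `L`-Lipschitz gradient gives, pointwise,
`ℒ₁(θ - s X) ≤ ℒ₁(θ) - s ⟪u, X⟫ + (L / 2) s² ‖X‖²` with `s = η / b` and `X = G + Z`.
In expectation the centred noise drops out of the linear term, and each clipped gradient satisfies
`⟪u, φ_d g_d⟫ ≥ φ_d (⟪u, a⟫ - ξ ‖u‖)` where `a` is the mean it deviates from by at most `ξ`,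
so `E ⟪u, X⟫` dominates the positive quantity of the hypothesis. Clipped gradients are bounded,
hence `E ‖X‖² < ∞`, and the quadratic term `O(s²)` loses to the linear one for small `s`.
-/

open MeasureTheory

open Filter Topology
open scoped RealInnerProductSpace

section ClipFactor

variable {C : ℝ}

lemma clipFactor_nonneg (hC : 0 ≤ C) (x : ℝ) : 0 ≤ clipFactor C x := by
  unfold clipFactor
  split_ifs with hx
  · exact zero_le_one
  · exact div_nonneg hC (hC.trans (not_le.1 hx).le)

lemma clipFactor_le_one (hC : 0 ≤ C) (x : ℝ) : clipFactor C x ≤ 1 := by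
  unfold clipFactor
  split_ifs with hx
  · exact le_rfl
  · exact div_le_one_of_le₀ (not_le.1 hx).le (hC.trans (not_le.1 hx).le)

lemma clipFactor_mul_le (hC : 0 ≤ C) (x : ℝ) : clipFactor C x * x ≤ C := by
  unfold clipFactor
  split_ifs with hxC
  · rwa [one_mul]
  · rw [div_mul_cancel₀ C (hC.trans_lt (not_le.1 hxC)).ne']

lemma measurable_clipFactor (C : ℝ) : Measurable (clipFactor C) :=
  Measurable.ite (measurableSet_le measurable_id measurable_const) measurable_const
    (measurable_const.div measurable_id)

variable {Ω E : Type*} [MeasurableSpace Ω] {P : Measure Ω} [IsFiniteMeasure P]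
  [NormedAddCommGroup E] {g : Ω → E}

lemma stronglyMeasurable_clipFactor_norm (hg : StronglyMeasurable g) :
    StronglyMeasurable (fun ω => clipFactor C ‖g ω‖) :=
  ((measurable_clipFactor C).comp hg.norm.measurable).stronglyMeasurable

lemma integrable_clipFactor_norm (hC : 0 ≤ C) (hg : StronglyMeasurable g) :
    Integrable (fun ω => clipFactor C ‖g ω‖) P := by
  refine Integrable.of_bound (stronglyMeasurable_clipFactor_norm hg).aestronglyMeasurable 1
    (ae_of_all _ fun ω => ?_)
  rw [Real.norm_of_nonneg (clipFactor_nonneg hC _)]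
  exact clipFactor_le_one hC _

lemma memLp_clipFactor_smul [NormedSpace ℝ E] (hC : 0 ≤ C) (hg : StronglyMeasurable g)
    (p : ENNReal) : MemLp (fun ω => clipFactor C ‖g ω‖ • g ω) p P := by
  refine MemLp.of_bound ((stronglyMeasurable_clipFactor_norm hg).smul hg).aestronglyMeasurable C
    (ae_of_all _ fun ω => ?_)
  rw [norm_smul, Real.norm_of_nonneg (clipFactor_nonneg hC _)]
  exact clipFactor_mul_le hC _

lemma memLp_sum_clipped [NormedSpace ℝ E] {ι : Type*} {B : Finset ι} {φ : ι → Ω → ℝ}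
    {g : ι → Ω → E} (hC : 0 ≤ C) (hg : ∀ d ∈ B, StronglyMeasurable (g d))
    (hφ : ∀ d ∈ B, ∀ ω, φ d ω = clipFactor C ‖g d ω‖) (p : ENNReal) :
    MemLp (fun ω => ∑ d ∈ B, φ d ω • g d ω) p P :=
  memLp_finsetSum _ fun d hd => by
    simpa only [hφ d hd] using memLp_clipFactor_smul hC (hg d hd) p

end ClipFactor

section Descent

variable {E : Type*} [NormedAddCommGroup E] [InnerProductSpace ℝ E] [CompleteSpace E]
  {f : E → ℝ}

theorem hasDerivAt_comp_add_smul (hf : ∀ x, DifferentiableAt ℝ f x) (x w : E) (t : ℝ) :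
    HasDerivAt (fun s : ℝ => f (x + s • w)) (⟪gradient f (x + t • w), w⟫) t := by
  have hline : HasDerivAt (fun s : ℝ => x + s • w) w t := by
    simpa using ((hasDerivAt_id t).smul_const w).const_add x
  simpa [InnerProductSpace.toDual_apply_apply, Function.comp_def] using
    (hasGradientAt_iff_hasFDerivAt.mp (hf _).hasGradientAt).comp_hasDerivAt t hline

theorem le_add_inner_gradient_add_sq_of_lipschitz_gradient {L : ℝ}
    (hf : ∀ x, DifferentiableAt ℝ f x)
    (hlip : ∀ x y, ‖gradient f x - gradient f y‖ ≤ L * ‖x - y‖) (x w : E) :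
    f (x + w) ≤ f x + ⟪gradient f x, w⟫ + L / 2 * ‖w‖ ^ 2 := by
  set ψ : ℝ → ℝ := fun t => f (x + t • w) - t * ⟪gradient f x, w⟫ - L / 2 * ‖w‖ ^ 2 * t ^ 2
  have hψ : ∀ t, HasDerivAt ψ
      (⟪gradient f (x + t • w) - gradient f x, w⟫ - L * ‖w‖ ^ 2 * t) t := fun t => by
    refine (((hasDerivAt_comp_add_smul hf x w t).sub ((hasDerivAt_id t).mul_const _)).sub
      ((hasDerivAt_pow 2 t).const_mul (L / 2 * ‖w‖ ^ 2))).congr_deriv ?_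
    rw [inner_sub_left, Nat.cast_ofNat, Nat.add_one_sub_one, pow_one]
    ring
  have hψ_nonpos : ∀ t ∈ interior (Set.Ici (0 : ℝ)),
      ⟪gradient f (x + t • w) - gradient f x, w⟫ - L * ‖w‖ ^ 2 * t ≤ 0 := by
    intro t ht
    rw [interior_Ici, Set.mem_Ioi] at ht
    have := calc ⟪gradient f (x + t • w) - gradient f x, w⟫
        ≤ ‖gradient f (x + t • w) - gradient f x‖ * ‖w‖ := real_inner_le_norm _ _
      _ ≤ L * ‖x + t • w - x‖ * ‖w‖ := by gcongr; exact hlip _ _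
      _ = L * ‖w‖ ^ 2 * t := by
        rw [add_sub_cancel_left, norm_smul, Real.norm_of_nonneg ht.le]; ring
    linarith
  have hψ_anti := antitoneOn_of_hasDerivWithinAt_nonpos (convex_Ici 0)
    (fun t _ => (hψ t).continuousAt.continuousWithinAt) (fun t _ => (hψ t).hasDerivWithinAt)
    hψ_nonpos
  have h10 : ψ 1 ≤ ψ 0 := hψ_anti Set.self_mem_Ici (Set.mem_Ici.2 zero_le_one) zero_le_one
  simp only [ψ, one_smul, zero_smul, add_zero, one_mul, zero_mul, sub_zero, one_pow, mul_one,
    zero_pow two_ne_zero, mul_zero] at h10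
  linarith

end Descent

section Expectation

variable {Ω E : Type*} [MeasurableSpace Ω] {P : Measure Ω}
  [NormedAddCommGroup E] [InnerProductSpace ℝ E]

lemma inner_sub_mul_norm_le_inner_of_norm_sub_le {u a y : E} {ξ : ℝ} (h : ‖y - a‖ ≤ ξ) :
    ⟪u, a⟫ - ξ * ‖u‖ ≤ ⟪u, y⟫ := by
  have hdev : -(‖u‖ * ξ) ≤ ⟪u, y - a⟫ :=
    (neg_le_neg (mul_le_mul_of_nonneg_left h (norm_nonneg u))).trans
      (neg_le_of_abs_le (abs_real_inner_le_norm u (y - a)))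
  rw [inner_sub_right] at hdev
  linarith

variable [CompleteSpace E]

lemma integral_mul_le_inner_integral_smul {φ : Ω → ℝ} {y : Ω → E} {u a : E} {ξ : ℝ}
    (hφ_nonneg : ∀ ω, 0 ≤ φ ω) (hφ : Integrable φ P) (hφy : Integrable (fun ω => φ ω • y ω) P)
    (hdev : ∀ᵐ ω ∂P, ‖y ω - a‖ ≤ ξ) :
    (∫ ω, φ ω ∂P) * (⟪u, a⟫ - ξ * ‖u‖) ≤ ⟪u, ∫ ω, φ ω • y ω ∂P⟫ := by
  rw [← integral_inner hφy, ← integral_mul_const]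
  refine integral_mono_ae (hφ.mul_const _) (hφy.const_inner u) ?_
  filter_upwards [hdev] with ω hω
  rw [real_inner_smul_right]
  exact mul_le_mul_of_nonneg_left (inner_sub_mul_norm_le_inner_of_norm_sub_le hω) (hφ_nonneg ω)

lemma sum_integral_mul_le_inner_integral_sum_clipped [IsFiniteMeasure P] {ι : Type*}
    {B : Finset ι} {φ : ι → Ω → ℝ} {g : ι → Ω → E} {C : ℝ} (hC : 0 ≤ C)
    (hg : ∀ d ∈ B, StronglyMeasurable (g d)) (hφ : ∀ d ∈ B, ∀ ω, φ d ω = clipFactor C ‖g d ω‖)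
    {u a : E} {ξ : ℝ} (hdev : ∀ d ∈ B, ∀ᵐ ω ∂P, ‖g d ω - a‖ ≤ ξ) :
    (∑ d ∈ B, ∫ ω, φ d ω ∂P) * (⟪u, a⟫ - ξ * ‖u‖) ≤ ⟪u, ∫ ω, ∑ d ∈ B, φ d ω • g d ω ∂P⟫ := by
  have hφg (d) (hd : d ∈ B) : Integrable (fun ω => φ d ω • g d ω) P := by
    simpa only [hφ d hd] using (memLp_clipFactor_smul (P := P) hC (hg d hd) 1).integrable le_rfl
  rw [integral_finsetSum _ hφg, inner_sum, Finset.sum_mul]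
  refine Finset.sum_le_sum fun d hd => integral_mul_le_inner_integral_smul (fun ω => ?_) ?_
    (hφg d hd) (hdev d hd)
  · simpa only [hφ d hd] using clipFactor_nonneg hC _
  · rw [funext (hφ d hd)]
    exact integrable_clipFactor_norm hC (hg d hd)

variable [IsProbabilityMeasure P] {f : E → ℝ} {L : ℝ}

theorem integral_comp_sub_smul_le_of_lipschitz_gradient (hf : ∀ x, DifferentiableAt ℝ f x)
    (hlip : ∀ x y, ‖gradient f x - gradient f y‖ ≤ L * ‖x - y‖) (x : E) {X : Ω → E}
    (hX : MemLp X 2 P) (s : ℝ) (hint : Integrable (fun ω => f (x - s • X ω)) P) :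
    ∫ ω, f (x - s • X ω) ∂P
      ≤ f x - s * ⟪gradient f x, ∫ ω, X ω ∂P⟫ + L / 2 * s ^ 2 * ∫ ω, ‖X ω‖ ^ 2 ∂P := by
  have hX_int : Integrable X P := hX.integrable one_le_two
  have hX_sq : Integrable (fun ω => ‖X ω‖ ^ 2) P :=
    (memLp_two_iff_integrable_sq_norm hX.aestronglyMeasurable).1 hX
  have hpoint : ∀ ω, f (x - s • X ω)
      ≤ f x - s * ⟪gradient f x, X ω⟫ + L / 2 * s ^ 2 * ‖X ω‖ ^ 2 := fun ω => by
    have := le_add_inner_gradient_add_sq_of_lipschitz_gradient hf hlip x (-(s • X ω))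
    rwa [← sub_eq_add_neg, inner_neg_right, real_inner_smul_right, norm_neg, norm_smul,
      mul_pow, Real.norm_eq_abs, sq_abs, ← mul_assoc, ← sub_eq_add_neg] at this
  have hinner_int : Integrable (fun ω => s * ⟪gradient f x, X ω⟫) P :=
    (hX_int.const_inner _).const_mul s
  have hlin_int : Integrable (fun ω => f x - s * ⟪gradient f x, X ω⟫) P :=
    (integrable_const _).sub hinner_int
  calc ∫ ω, f (x - s • X ω) ∂P
      ≤ ∫ ω, (f x - s * ⟪gradient f x, X ω⟫ + L / 2 * s ^ 2 * ‖X ω‖ ^ 2) ∂P :=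
        integral_mono hint (hlin_int.add (hX_sq.const_mul _)) hpoint
    _ = _ := by
      rw [integral_add hlin_int (hX_sq.const_mul _), integral_sub (integrable_const _) hinner_int,
        integral_const_mul, integral_const_mul, integral_const, probReal_univ, one_smul,
        integral_inner hX_int]

end Expectation

lemma exists_pos_forall_mul_sq_lt_mul (a : ℝ) {c : ℝ} (hc : 0 < c) :
    ∃ s₀ > (0 : ℝ), ∀ s, 0 < s → s < s₀ → a * s ^ 2 < c * s := by
  have hlin : ∀ᶠ s in 𝓝 (0 : ℝ), a * s < c :=
    ((continuous_const.mul continuous_id).tendsto' 0 0 (mul_zero a)).eventually (gt_mem_nhds hc)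
  obtain ⟨s₀, hs₀, hsub⟩ := mem_nhdsGT_iff_exists_Ioo_subset.1 (nhdsWithin_le_nhds hlin)
  refine ⟨s₀, hs₀, fun s hs hss₀ => ?_⟩
  have : a * s < c := hsub ⟨hs, hss₀⟩
  nlinarith

theorem stmt9_general (r : ℕ) (L1 : EuclideanSpace ℝ (Fin r) → ℝ) (L2 : ℝ)
    (hdiff : ∀ x, DifferentiableAt ℝ L1 x)
    (hlip : ∀ x y, ‖gradient L1 x - gradient L1 y‖ ≤ L2 * ‖x - y‖)
    (θ : EuclideanSpace ℝ (Fin r)) (u : EuclideanSpace ℝ (Fin r))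
    (hu : u = gradient L1 θ) (v : EuclideanSpace ℝ (Fin r))
    (ξ₁ ξ₂ : ℝ)
    (C₁ C₂ : ℝ) (hC₁ : 0 < C₁) (hC₂ : 0 < C₂)
    (b : ℝ) (hb : 0 < b)
    {Ω : Type*} [MeasurableSpace Ω] (P : Measure Ω) [IsProbabilityMeasure P]
    {ι : Type*} [DecidableEq ι] (B₁ B₂ : Finset ι) (hdisj : Disjoint B₁ B₂)
    (g : ι → Ω → EuclideanSpace ℝ (Fin r))
    (hgmeas : ∀ d ∈ B₁ ∪ B₂, StronglyMeasurable (g d))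
    (hdev₁ : ∀ d ∈ B₁, ∀ᵐ ω ∂P, ‖g d ω - u‖ ≤ ξ₁)
    (hdev₂ : ∀ d ∈ B₂, ∀ᵐ ω ∂P, ‖g d ω - v‖ ≤ ξ₂)
    (φ : ι → Ω → ℝ)
    (hφ₁ : ∀ d ∈ B₁, ∀ ω, φ d ω = clipFactor C₁ ‖g d ω‖)
    (hφ₂ : ∀ d ∈ B₂, ∀ ω, φ d ω = clipFactor C₂ ‖g d ω‖)
    (G : Ω → EuclideanSpace ℝ (Fin r))
    (hG : ∀ ω, G ω = ∑ d ∈ B₁ ∪ B₂, φ d ω • g d ω)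
    (Z : Ω → EuclideanSpace ℝ (Fin r)) (hZmeas : StronglyMeasurable Z)
    (hZmean : ∫ ω, Z ω ∂P = 0)
    (hZsq : Integrable (fun ω => ‖Z ω‖ ^ 2) P)
    (θ' : ℝ → Ω → EuclideanSpace ℝ (Fin r))
    (hθ' : ∀ η : ℝ, ∀ ω, θ' η ω = θ - (η / b) • (G ω + Z ω))
    (hintL : ∀ η : ℝ, Integrable (fun ω => L1 (θ' η ω)) P)
    (hpos : 0 < (∑ d ∈ B₁, ∫ ω, φ d ω ∂P) * (‖u‖ ^ 2 - ξ₁ * ‖u‖)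
        + (∑ d ∈ B₂, ∫ ω, φ d ω ∂P) * ((inner ℝ u v : ℝ) - ξ₂ * ‖u‖)) :
    ∃ η₀ > (0 : ℝ), ∀ η : ℝ, 0 < η → η < η₀ →
      (∫ ω, L1 (θ' η ω) ∂P) < L1 θ := by
  have hGsplit (ω : Ω) : G ω = ∑ d ∈ B₁, φ d ω • g d ω + ∑ d ∈ B₂, φ d ω • g d ω :=
    (hG ω).trans (Finset.sum_union hdisj)
  have hg₁ (d) (hd : d ∈ B₁) := hgmeas d (Finset.mem_union_left _ hd)
  have hg₂ (d) (hd : d ∈ B₂) := hgmeas d (Finset.mem_union_right _ hd)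
  have hS₁ := memLp_sum_clipped (P := P) hC₁.le hg₁ hφ₁ 2
  have hS₂ := memLp_sum_clipped (P := P) hC₂.le hg₂ hφ₂ 2
  have hZ : MemLp Z 2 P := (memLp_two_iff_integrable_sq_norm hZmeas.aestronglyMeasurable).2 hZsq
  have hGm : MemLp G 2 P := by
    rw [funext hGsplit]
    exact hS₁.add hS₂
  have hfirst : (∑ d ∈ B₁, ∫ ω, φ d ω ∂P) * (‖u‖ ^ 2 - ξ₁ * ‖u‖)
      + (∑ d ∈ B₂, ∫ ω, φ d ω ∂P) * (⟪u, v⟫ - ξ₂ * ‖u‖)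
      ≤ ⟪u, ∫ ω, (G ω + Z ω) ∂P⟫ := by
    rw [integral_add (hGm.integrable one_le_two) (hZ.integrable one_le_two), hZmean, add_zero,
      funext hGsplit, integral_add (hS₁.integrable one_le_two) (hS₂.integrable one_le_two),
      inner_add_right, ← real_inner_self_eq_norm_sq]
    exact add_le_add (sum_integral_mul_le_inner_integral_sum_clipped hC₁.le hg₁ hφ₁ hdev₁)
      (sum_integral_mul_le_inner_integral_sum_clipped hC₂.le hg₂ hφ₂ hdev₂)
  have hdescent (η : ℝ) : ∫ ω, L1 (θ' η ω) ∂P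
      ≤ L1 θ - η / b * ⟪u, ∫ ω, (G ω + Z ω) ∂P⟫
        + L2 / 2 * (η / b) ^ 2 * ∫ ω, ‖G ω + Z ω‖ ^ 2 ∂P := by
    have hint := hintL η
    simp only [hθ' η] at hint ⊢
    rw [hu]
    exact integral_comp_sub_smul_le_of_lipschitz_gradient hdiff hlip θ (hGm.add hZ) (η / b) hint
  obtain ⟨s₀, hs₀, hsmall⟩ :=
    exists_pos_forall_mul_sq_lt_mul (L2 / 2 * ∫ ω, ‖G ω + Z ω‖ ^ 2 ∂P) hpos
  refine ⟨s₀ * b, mul_pos hs₀ hb, fun η hη hηs₀ => ?_⟩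
  have hs : 0 < η / b := div_pos hη hb
  have hquad := hsmall (η / b) hs ((div_lt_iff₀ hb).2 hηs₀)
  have hlin := mul_le_mul_of_nonneg_left hfirst hs.le
  linarith [hdescent η]

/-- In the one-step IDP-SGD setting, if the raw first-order decrease condition holds
(`Σ_{B₁} E[φ_d](‖u‖² − ξ₁‖u‖) + Σ_{B₂} E[φ_d](⟪u,v⟫ − ξ₂‖u‖) > 0`), then for every
sufficiently small learning rate `η > 0` the expected loss strictly decreases. -/
theorem stmt9 (r : ℕ) (L1 : EuclideanSpace ℝ (Fin r) → ℝ) (L2 : ℝ) (hL2 : 0 ≤ L2)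
    (hdiff : ∀ x, DifferentiableAt ℝ L1 x)
    (hlip : ∀ x y, ‖gradient L1 x - gradient L1 y‖ ≤ L2 * ‖x - y‖)
    (θ : EuclideanSpace ℝ (Fin r)) (u : EuclideanSpace ℝ (Fin r))
    (hu : u = gradient L1 θ) (v : EuclideanSpace ℝ (Fin r))
    (ξ₁ ξ₂ : ℝ) (hξ₁ : 0 ≤ ξ₁) (hξ₂ : 0 ≤ ξ₂)
    (C₁ C₂ : ℝ) (hC₁ : 0 < C₁) (hC₂ : 0 < C₂)
    (b : ℝ) (hb : 0 < b)
    {Ω : Type*} [MeasurableSpace Ω] (P : Measure Ω) [IsProbabilityMeasure P]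
    {ι : Type*} [DecidableEq ι] (B₁ B₂ : Finset ι) (hdisj : Disjoint B₁ B₂)
    (g : ι → Ω → EuclideanSpace ℝ (Fin r))
    (hgmeas : ∀ d ∈ B₁ ∪ B₂, StronglyMeasurable (g d))
    (hdev₁ : ∀ d ∈ B₁, ∀ᵐ ω ∂P, ‖g d ω - u‖ ≤ ξ₁)
    (hdev₂ : ∀ d ∈ B₂, ∀ᵐ ω ∂P, ‖g d ω - v‖ ≤ ξ₂)
    (φ : ι → Ω → ℝ)
    (hφ₁ : ∀ d ∈ B₁, ∀ ω, φ d ω = clipFactor C₁ ‖g d ω‖)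
    (hφ₂ : ∀ d ∈ B₂, ∀ ω, φ d ω = clipFactor C₂ ‖g d ω‖)
    (G : Ω → EuclideanSpace ℝ (Fin r))
    (hG : ∀ ω, G ω = ∑ d ∈ B₁ ∪ B₂, φ d ω • g d ω)
    (Z : Ω → EuclideanSpace ℝ (Fin r)) (hZmeas : StronglyMeasurable Z)
    (hZmean : ∫ ω, Z ω ∂P = 0)
    (hZsq : Integrable (fun ω => ‖Z ω‖ ^ 2) P)
    (horth : ∫ ω, (inner ℝ (G ω) (Z ω) : ℝ) ∂P = 0)
    (θ' : ℝ → Ω → EuclideanSpace ℝ (Fin r))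
    (hθ' : ∀ η : ℝ, ∀ ω, θ' η ω = θ - (η / b) • (G ω + Z ω))
    (hintL : ∀ η : ℝ, Integrable (fun ω => L1 (θ' η ω)) P)
    (hpos : 0 < (∑ d ∈ B₁, ∫ ω, φ d ω ∂P) * (‖u‖ ^ 2 - ξ₁ * ‖u‖)
        + (∑ d ∈ B₂, ∫ ω, φ d ω ∂P) * ((inner ℝ u v : ℝ) - ξ₂ * ‖u‖)) :
    ∃ η₀ > (0 : ℝ), ∀ η : ℝ, 0 < η → η < η₀ →
      (∫ ω, L1 (θ' η ω) ∂P) < L1 θ :=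
  stmt9_general r L1 L2 hdiff hlip θ u hu v ξ₁ ξ₂ C₁ C₂ hC₁ hC₂ b hb P B₁ B₂ hdisj g hgmeas hdev₁
    hdev₂ φ hφ₁ hφ₂ G hG Z hZmeas hZmean hZsq θ' hθ' hintL hpos
end

section
/- Let K ∈ ℕ, q ∈ [0, 1], E a real normed vector space, v : {1,…,K} → E, and a : ℕ → ℝ. Let ω = (ω_1, …, ω_K) be independent Bernoulli(q) random variables (each ω_k ∈ {0,1} with P[ω_k = 1] = q), and define the random vector S(ω) = Σ_{k : ω_k = 1} a(#{ j : j > k and ω_j = 1 }) • v_k, where #{ j : j > k and ω_j = 1 } counts the sampled indices ranked below k. Then E[S] = Σ_{k=1}^{K} q · ( Σ_{i=0}^{K−k} binom(K−k, i) q^i (1−q)^{K−k−i} a(i) ) • v_k. -/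
open Finset

lemma prod_ite_bern {K : ℕ} (q : ℝ) (ω : Fin K → Bool) :
    (∏ k : Fin K, (if ω k then q else 1 - q))
      = q ^ #(univ.filter (fun j => ω j = true)) *
        (1 - q) ^ (K - #(univ.filter (fun j => ω j = true))) := by
  rw [Finset.prod_ite, Finset.prod_const, Finset.prod_const]
  congr 2
  have h := Finset.card_filter_add_card_filter_not
    (s := (univ : Finset (Fin K))) (p := fun j => ω j = true)
  simp only [card_univ, Fintype.card_fin, Bool.not_eq_true] at h ⊢
  omega

lemma bernB (K : ℕ) (q : ℝ) (a : ℕ → ℝ) :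
    ∑ ω : Fin K → Bool, (∏ k : Fin K, (if ω k then q else 1 - q)) *
        a (#(univ.filter (fun j => ω j = true)))
    = ∑ i ∈ range (K + 1), (K.choose i : ℝ) * q ^ i * (1 - q) ^ (K - i) * a i := by
  have step1 : ∑ ω : Fin K → Bool, (∏ k : Fin K, (if ω k then q else 1 - q)) *
        a (#(univ.filter (fun j => ω j = true)))
      = ∑ S ∈ (univ : Finset (Fin K)).powerset,
          q ^ #S * (1 - q) ^ (K - #S) * a #S := by
    refine Finset.sum_nbij' (i := fun ω => univ.filter (fun j => ω j = true))
      (j := fun S => fun k => decide (k ∈ S)) ?_ ?_ ?_ ?_ ?_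
    · intro ω _; simp
    · intro S _; simp
    · intro ω _; funext k; simp
    · intro S _; ext k; simp
    · intro ω _; rw [prod_ite_bern]
  rw [step1, Finset.sum_powerset]
  simp only [card_univ, Fintype.card_fin]
  refine Finset.sum_congr rfl fun j hj => ?_
  rw [Finset.sum_powersetCard j univ (fun i => q ^ i * (1 - q) ^ (K - i) * a i)]
  simp only [card_univ, Fintype.card_fin, nsmul_eq_mul]
  ring

/-- Core expectation identity for the objective of INO-SGD: indices `k : Fin K` are data
ranked by descending loss, each independently sampled with probability `q` (the sample
space `Fin K → Bool` carries the product Bernoulli(q) distribution, made explicit by the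
weights `∏ k, if ω k then q else 1 - q`); a sampled datum's weight `a i` depends on the
number `i` of sampled data ranked below it.  The expectation of the weighted gradient sum
equals the binomially reweighted sum of the per-datum gradients `v k`. -/
theorem stmt10 {E : Type*} [NormedAddCommGroup E] [NormedSpace ℝ E]
    (K : ℕ) (q : ℝ) (hq0 : 0 ≤ q) (hq1 : q ≤ 1)
    (v : Fin K → E) (a : ℕ → ℝ) :
    (∑ ω : Fin K → Bool,
        (∏ k : Fin K, (if ω k then q else 1 - q)) •
          ∑ k ∈ Finset.univ.filter (fun k : Fin K => ω k = true),
            a ((Finset.univ.filter (fun j : Fin K => k < j ∧ ω j = true)).card) • v k)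
      = ∑ k : Fin K,
          (q * ∑ i ∈ Finset.range (K - (k : ℕ)),
              ((K - 1 - (k : ℕ)).choose i : ℝ) * q ^ i * (1 - q) ^ (K - 1 - (k : ℕ) - i)
                * a i) • v k := by
  induction K with
  | zero => simp
  | succ n ih =>
    have hprod : ∀ (b : Bool) (ω' : Fin n → Bool),
        (∏ k : Fin (n+1), (if Fin.cons (α := fun _ => Bool) b ω' k then q else 1 - q))
          = (if b then q else 1 - q) * ∏ k : Fin n, (if ω' k then q else 1 - q) := by
      intro b ω'
      rw [Fin.prod_univ_succ]
      simp
    have hcard0 : ∀ (b : Bool) (ω' : Fin n → Bool),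
        #(univ.filter (fun j : Fin (n+1) => (0 : Fin (n+1)) < j ∧ Fin.cons (α := fun _ => Bool) b ω' j = true))
          = #(univ.filter (fun j : Fin n => ω' j = true)) := by
      intro b ω'
      rw [Finset.card_filter, Finset.card_filter, Fin.sum_univ_succ]
      simp [Fin.succ_pos]
    have hcards : ∀ (b : Bool) (ω' : Fin n → Bool) (k : Fin n),
        #(univ.filter (fun j : Fin (n+1) => k.succ < j ∧ Fin.cons (α := fun _ => Bool) b ω' j = true))
          = #(univ.filter (fun j : Fin n => k < j ∧ ω' j = true)) := by
      intro b ω' k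
      rw [Finset.card_filter, Finset.card_filter, Fin.sum_univ_succ]
      simp [Fin.succ_lt_succ_iff]
    have hsum : ∀ (b : Bool) (ω' : Fin n → Bool),
        (∑ k ∈ univ.filter (fun k : Fin (n+1) => Fin.cons (α := fun _ => Bool) b ω' k = true),
            a (#(univ.filter (fun j : Fin (n+1) => k < j ∧ Fin.cons (α := fun _ => Bool) b ω' j = true))) • v k)
          = (if b then a (#(univ.filter (fun j : Fin n => ω' j = true))) • v 0 else 0)
            + ∑ k ∈ univ.filter (fun k : Fin n => ω' k = true),
                a (#(univ.filter (fun j : Fin n => k < j ∧ ω' j = true))) • v k.succ := by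
      intro b ω'
      simp only [Finset.sum_filter]
      rw [Fin.sum_univ_succ]
      simp only [Fin.cons_zero, Fin.cons_succ, hcard0 b ω', hcards b ω']
    rw [← Equiv.sum_comp (Fin.consEquiv (fun _ : Fin (n+1) => Bool))
        (fun ω : Fin (n+1) → Bool =>
          (∏ k : Fin (n+1), (if ω k then q else 1 - q)) •
            ∑ k ∈ Finset.univ.filter (fun k : Fin (n+1) => ω k = true),
              a ((Finset.univ.filter (fun j : Fin (n+1) => k < j ∧ ω j = true)).card) • v k),
      Fintype.sum_prod_type, Fintype.sum_bool]
    simp only [Fin.consEquiv_apply, hprod, hsum, if_true, if_false, Bool.false_eq_true]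
    simp only [zero_add, smul_add, Finset.sum_add_distrib]
    rw [add_assoc]
    have hA : (∑ x : Fin n → Bool, (q * ∏ k : Fin n, if x k then q else 1 - q) •
          (a #(Finset.filter (fun j => x j = true) Finset.univ) • v 0))
        = (q * ∑ x : Fin n → Bool, (∏ k : Fin n, if x k then q else 1 - q) *
            a #(Finset.filter (fun j => x j = true) Finset.univ)) • v 0 := by
      simp only [smul_smul, mul_assoc]
      rw [← Finset.sum_smul, ← Finset.mul_sum]
    have hB : (∑ x : Fin n → Bool, (q * ∏ k : Fin n, if x k then q else 1 - q) •
          ∑ k ∈ Finset.filter (fun j => x j = true) Finset.univ,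
            a #(Finset.filter (fun j => k < j ∧ x j = true) Finset.univ) • v k.succ)
        + (∑ x : Fin n → Bool, ((1 - q) * ∏ k : Fin n, if x k then q else 1 - q) •
          ∑ k ∈ Finset.filter (fun j => x j = true) Finset.univ,
            a #(Finset.filter (fun j => k < j ∧ x j = true) Finset.univ) • v k.succ)
        = ∑ x : Fin n → Bool, (∏ k : Fin n, if x k then q else 1 - q) •
          ∑ k ∈ Finset.filter (fun j => x j = true) Finset.univ,
            a #(Finset.filter (fun j => k < j ∧ x j = true) Finset.univ) • v k.succ := by
      rw [← Finset.sum_add_distrib]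
      refine Finset.sum_congr rfl fun x _ => ?_
      rw [← add_smul]
      congr 1
      ring
    rw [hA, hB, bernB n q a, ih (fun j => v j.succ), Fin.sum_univ_succ]
    simp only [Fin.val_zero, Fin.val_succ, Nat.sub_zero, Nat.add_sub_cancel,
      Nat.succ_sub_succ]
    congr 1
    refine Finset.sum_congr rfl fun k _ => ?_
    have hk : n - 1 - (k : ℕ) = n - ((k : ℕ) + 1) := by omega
    rw [hk]
end

section
/- Let q ∈ [0, 1] and let a : ℕ → ℝ be nondecreasing with 0 ≤ a(i) ≤ 1 for all i. For m ∈ ℕ define W(m) = Σ_{i=0}^{m} binom(m, i) q^i (1−q)^{m−i} a(i). Then W is nondecreasing in m (W(m) ≤ W(m+1) for all m) and 0 ≤ W(m) ≤ 1 for all m. -/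
open Finset

private lemma binom_sum_one (q : ℝ) (m : ℕ) :
    ∑ i ∈ range (m + 1), (m.choose i : ℝ) * q ^ i * (1 - q) ^ (m - i) = 1 := by
  have h := add_pow q (1 - q) m
  have h2 : (q + (1 - q)) ^ m = 1 := by ring_nf
  rw [h2] at h
  calc ∑ i ∈ range (m + 1), (m.choose i : ℝ) * q ^ i * (1 - q) ^ (m - i)
      = ∑ i ∈ range (m + 1), q ^ i * (1 - q) ^ (m - i) * (m.choose i : ℝ) :=
        Finset.sum_congr rfl fun i _ => by ring
    _ = 1 := h.symm

private lemma binom_step (q : ℝ) (a : ℕ → ℝ) (m : ℕ) :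
    ∑ i ∈ range (m + 2), ((m + 1).choose i : ℝ) * q ^ i * (1 - q) ^ (m + 1 - i) * a i
      = ∑ i ∈ range (m + 1),
        (m.choose i : ℝ) * q ^ i * (1 - q) ^ (m - i) * (q * a (i + 1) + (1 - q) * a i) := by
  rw [Finset.sum_range_succ']
  have hsplit : ∀ i ∈ range (m + 1),
      ((m + 1).choose (i + 1) : ℝ) * q ^ (i + 1) * (1 - q) ^ (m + 1 - (i + 1)) * a (i + 1)
        = (m.choose i : ℝ) * q ^ i * (1 - q) ^ (m - i) * (q * a (i + 1))
          + (m.choose (i + 1) : ℝ) * q ^ (i + 1) * (1 - q) ^ (m - i) * a (i + 1) := by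
    intro i hi
    have hc : ((m + 1).choose (i + 1) : ℝ) = m.choose i + m.choose (i + 1) := by
      rw [Nat.choose_succ_succ]; push_cast; ring
    have he : m + 1 - (i + 1) = m - i := by omega
    rw [he, hc]; ring
  have hr : ∀ i ∈ range (m + 1),
      (m.choose i : ℝ) * q ^ i * (1 - q) ^ (m - i) * (q * a (i + 1) + (1 - q) * a i)
        = (m.choose i : ℝ) * q ^ i * (1 - q) ^ (m - i) * (q * a (i + 1))
          + (m.choose i : ℝ) * q ^ i * (1 - q) ^ (m - i) * ((1 - q) * a i) := by
    intro i _; ring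
  rw [Finset.sum_congr rfl hsplit, Finset.sum_add_distrib,
    Finset.sum_congr rfl hr, Finset.sum_add_distrib]
  -- goal now: S1 + S2 + T0 = S1 + R
  -- expand last term of S2 (which vanishes)
  nth_rewrite 2 [Finset.sum_range_succ]
  -- expand first term of R
  nth_rewrite 3 [Finset.sum_range_succ']
  have hz : ((m.choose (m + 1) : ℝ)) = 0 := by
    rw [Nat.choose_eq_zero_of_lt (by omega)]; norm_num
  rw [hz]
  have hcongr : ∀ i ∈ range m,
      (m.choose (i + 1) : ℝ) * q ^ (i + 1) * (1 - q) ^ (m - (i + 1)) * ((1 - q) * a (i + 1))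
        = (m.choose (i + 1) : ℝ) * q ^ (i + 1) * (1 - q) ^ (m - i) * a (i + 1) := by
    intro i hi
    have hi' : i < m := Finset.mem_range.mp hi
    have : m - i = (m - (i + 1)) + 1 := by omega
    rw [this, pow_succ]; ring
  rw [Finset.sum_congr rfl hcongr]
  simp only [Nat.choose_zero_right, Nat.cast_one, Nat.sub_zero, hz]
  ring

/-- The binomial expectation `W m = E[a(X)]`, `X ~ Binomial(m, q)`, of a nondecreasing
weight function `a` with values in `[0, 1]` is nondecreasing in `m` and lies in `[0, 1]`. -/
theorem stmt11 (q : ℝ) (hq0 : 0 ≤ q) (hq1 : q ≤ 1) (a : ℕ → ℝ)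
    (hmono : Monotone a) (h0 : ∀ i, 0 ≤ a i) (h1 : ∀ i, a i ≤ 1)
    (W : ℕ → ℝ)
    (hW : ∀ m, W m = ∑ i ∈ Finset.range (m + 1),
        (m.choose i : ℝ) * q ^ i * (1 - q) ^ (m - i) * a i) :
    (∀ m, W m ≤ W (m + 1)) ∧ ∀ m, 0 ≤ W m ∧ W m ≤ 1 := by
  have hq1' : 0 ≤ 1 - q := by linarith
  have hp : ∀ m i, 0 ≤ (m.choose i : ℝ) * q ^ i * (1 - q) ^ (m - i) := by
    intro m i; positivity
  constructor
  · intro m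
    rw [hW m, hW (m + 1)]
    rw [show m + 1 + 1 = m + 2 from rfl, binom_step q a m]
    apply Finset.sum_le_sum
    intro i _
    have hle : a i ≤ q * a (i + 1) + (1 - q) * a i := by
      have := hmono (Nat.le_succ i)
      nlinarith
    exact mul_le_mul_of_nonneg_left hle (hp m i)
  · intro m
    rw [hW m]
    constructor
    · exact Finset.sum_nonneg fun i _ => mul_nonneg (hp m i) (h0 i)
    · have hle : ∑ i ∈ range (m + 1), (m.choose i : ℝ) * q ^ i * (1 - q) ^ (m - i) * a i
          ≤ ∑ i ∈ range (m + 1), (m.choose i : ℝ) * q ^ i * (1 - q) ^ (m - i) := by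
        apply Finset.sum_le_sum
        intro i _
        have := mul_le_mul_of_nonneg_left (h1 i) (hp m i)
        linarith
      linarith [binom_sum_one q m]
end
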